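/- Under the R-semantics, for every S-CORE term P and state σ, ⟨P ; inv P, σ⟩ ⇓ σ (strong reversibility: running P followed by its syntactic inverse recovers the initial state). -/

import Mathlib

def push : ℤ × List ℤ × ℕ → ℤ × List ℤ × ℕ
  | (v, t, 0) => (0, v::t, 0)
  | (0, v::t, c+1) => (0, v::t, c+1)
  | (u, s, c+1) => (u, s, c)

def pop : ℤ × List ℤ × ℕ → ℤ × List ℤ × ℕ
  | (0, v::t, 0) => (v, t, 0)
  | (0, v::t, c+1) => (0, v::t, c+1)
  | (u, s, c) => (u, s, c+1)

inductive Term where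
  | skip : Term
  | inc : String → Term
  | dec : String → Term
  | push : String → Term
  | pop : String → Term
  | seq : Term → Term → Term
  | forLoop : String → Term → Term

def inv : Term → Term
  | .skip => .skip
  | .inc x => .dec x
  | .dec x => .inc x
  | .push x => .pop x
  | .pop x => .push x
  | .seq p q => .seq (inv q) (inv p)
  | .forLoop x p => .forLoop x (inv p)

def occurs (x : String) : Term → Prop
  | .skip => False
  | .inc y => x = y
  | .dec y => x = y
  | .push y => x = y
  | .pop y => x = y
  | .seq p q => occurs x p ∨ occurs x q
  | .forLoop y p => x = y ∨ occurs x p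

/-- Well-formed terms: the leading variable of a `FOR` never occurs in its body. -/
def WF : Term → Prop
  | .seq p q => WF p ∧ WF q
  | .forLoop x p => ¬ occurs x p ∧ WF p
  | _ => True

abbrev State := String → ℤ × List ℤ × ℕ

def upd (σ : State) (x : String) (p : ℤ × List ℤ × ℕ) : State :=
  fun y => if y = x then p else σ y

mutual
/-- The big-step R-semantics of S-CORE. -/
inductive Bigstep : Term → State → State → Prop where
  | skip (σ) : Bigstep .skip σ σ
  | inc (x σ) : Bigstep (.inc x) σ (upd σ x ((σ x).1 + 1, (σ x).2.1, (σ x).2.2))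
  | dec (x σ) : Bigstep (.dec x) σ (upd σ x ((σ x).1 - 1, (σ x).2.1, (σ x).2.2))
  | push (x σ) : Bigstep (.push x) σ (upd σ x (_root_.push (σ x)))
  | pop (x σ) : Bigstep (.pop x) σ (upd σ x (_root_.pop (σ x)))
  | seq {p q σ ν τ} : Bigstep p σ ν → Bigstep q ν τ → Bigstep (.seq p q) σ τ
  | forFwd {x p σ τ} : (σ x).1 ≥ 0 → Iter p (σ x).1.toNat σ τ →
      Bigstep (.forLoop x p) σ τ
  | forBwd {x p σ τ} : (σ x).1 < 0 → Iter (inv p) (-(σ x).1).toNat σ τ →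
      Bigstep (.forLoop x p) σ τ

/-- `Iter p n σ τ`: `n`-fold iteration of `p` takes `σ` to `τ`. -/
inductive Iter : Term → ℕ → State → State → Prop where
  | base (p σ) : Iter p 0 σ σ
  | step {p n σ ν τ} : Bigstep p σ ν → Iter p n ν τ → Iter p (n+1) σ τ
end

-- auxiliary lemmas
lemma pop_push (s : ℤ × List ℤ × ℕ) : pop (push s) = s := by
  rcases s with ⟨u, t, c⟩
  cases c with
  | zero => simp [push, pop]
  | succ c =>
    cases t with
    | nil => simp [push, pop]
    | cons v t =>
      rcases eq_or_ne u 0 with rfl | h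
      · simp [push, pop]
      · have h1 : push (u, v::t, c+1) = (u, v::t, c) := by
          unfold push; split <;> simp_all
        rw [h1]
        unfold pop; split <;> simp_all

lemma push_pop (s : ℤ × List ℤ × ℕ) : push (pop s) = s := by
  rcases s with ⟨u, t, c⟩
  rcases eq_or_ne u 0 with rfl | h
  · cases t with
    | nil =>
      have h1 : pop ((0:ℤ), ([]:List ℤ), c) = (0, [], c+1) := by
        unfold pop; split <;> simp_all
      rw [h1]; unfold push; split <;> simp_all
    | cons v t =>
      cases c with
      | zero => simp [push, pop]
      | succ c => simp [push, pop]
  · have h1 : pop (u, t, c) = (u, t, c+1) := by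
      unfold pop; split <;> simp_all
    rw [h1]; unfold push
    cases t with
    | nil => split <;> simp_all
    | cons v t => split <;> simp_all

lemma upd_same (σ : State) (x p) : upd σ x p x = p := by simp [upd]

lemma upd_ne (σ : State) {x y} (h : y ≠ x) (p) : upd σ x p y = σ y := by simp [upd, h]

lemma upd_upd (σ : State) (x p q) : upd (upd σ x p) x q = upd σ x q := by
  funext y; by_cases h : y = x <;> simp [upd, h]

lemma upd_self (σ : State) (x) : upd σ x (σ x) = σ := by
  funext y; by_cases h : y = x <;> simp [upd, h]

lemma tinv_inv (p : Term) : inv (inv p) = p := by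
  induction p <;> simp_all [inv]

lemma occurs_inv (x : String) (p : Term) : occurs x (inv p) ↔ occurs x p := by
  induction p <;> simp_all [inv, occurs] <;> tauto

lemma iter_cases {q n σ τ} (h : Iter q (n+1) σ τ) :
    ∃ ν, Bigstep q σ ν ∧ Iter q n ν τ := by
  cases h with
  | step hb hi => exact ⟨_, hb, hi⟩

lemma Iter.snoc {q : Term} {n σ ν τ} (h1 : Iter q n σ ν) (h2 : Bigstep q ν τ) :
    Iter q (n+1) σ τ := by
  induction n generalizing σ with
  | zero => cases h1; exact Iter.step h2 (Iter.base _ _)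
  | succ n ih =>
    obtain ⟨ρ, hb, hi⟩ := iter_cases h1
    exact Iter.step hb (ih hi)

lemma iter_rev {q q' : Term} (hrev : ∀ σ τ, Bigstep q σ τ → Bigstep q' τ σ)
    {n σ τ} (h : Iter q n σ τ) : Iter q' n τ σ := by
  induction n generalizing σ with
  | zero => cases h; exact Iter.base _ _
  | succ n ih =>
    obtain ⟨ν, hb, hi⟩ := iter_cases h
    exact Iter.snoc (ih hi) (hrev _ _ hb)

lemma iter_nochange {q : Term} {x : String}
    (hq : ∀ σ τ, Bigstep q σ τ → τ x = σ x)
    {n σ τ} (h : Iter q n σ τ) : τ x = σ x := by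
  induction n generalizing σ with
  | zero => cases h; rfl
  | succ n ih =>
    obtain ⟨ν, hb, hi⟩ := iter_cases h
    rw [ih hi, hq _ _ hb]

lemma nochange (x : String) (p : Term) (hx : ¬ occurs x p) :
    (∀ σ τ, Bigstep p σ τ → τ x = σ x) ∧
    (∀ σ τ, Bigstep (inv p) σ τ → τ x = σ x) := by
  induction p with
  | skip =>
    constructor <;> intro σ τ h <;> cases h <;> rfl
  | inc y =>
    simp only [occurs] at hx
    constructor <;> intro σ τ h <;> cases h <;> rw [upd_ne _ hx]
  | dec y =>
    simp only [occurs] at hx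
    constructor <;> intro σ τ h <;> cases h <;> rw [upd_ne _ hx]
  | push y =>
    simp only [occurs] at hx
    constructor <;> intro σ τ h <;> cases h <;> rw [upd_ne _ hx]
  | pop y =>
    simp only [occurs] at hx
    constructor <;> intro σ τ h <;> cases h <;> rw [upd_ne _ hx]
  | seq p q ihp ihq =>
    simp only [occurs, not_or] at hx
    obtain ⟨hp, hq⟩ := hx
    refine ⟨?_, ?_⟩
    · intro σ τ h
      cases h with
      | seq h1 h2 => rw [(ihq hq).1 _ _ h2, (ihp hp).1 _ _ h1]
    · intro σ τ h
      cases h with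
      | seq h1 h2 => rw [(ihp hp).2 _ _ h2, (ihq hq).2 _ _ h1]
  | forLoop y p ih =>
    simp only [occurs, not_or] at hx
    obtain ⟨hxy, hp⟩ := hx
    refine ⟨?_, ?_⟩
    · intro σ τ h
      cases h with
      | forFwd h0 hi => exact iter_nochange (ih hp).1 hi
      | forBwd h0 hi => exact iter_nochange (ih hp).2 hi
    · intro σ τ h
      cases h with
      | forFwd h0 hi => exact iter_nochange (ih hp).2 hi
      | forBwd h0 hi =>
        rw [tinv_inv] at hi
        exact iter_nochange (ih hp).1 hi

lemma iter_total {q : Term} (hq : ∀ σ, ∃ τ, Bigstep q σ τ) (n : ℕ) (σ : State) :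
    ∃ τ, Iter q n σ τ := by
  induction n generalizing σ with
  | zero => exact ⟨σ, Iter.base _ _⟩
  | succ n ih =>
    obtain ⟨ν, hb⟩ := hq σ
    obtain ⟨τ, hi⟩ := ih ν
    exact ⟨τ, Iter.step hb hi⟩

lemma total (p : Term) :
    (∀ σ, ∃ τ, Bigstep p σ τ) ∧ (∀ σ, ∃ τ, Bigstep (inv p) σ τ) := by
  induction p with
  | skip => exact ⟨fun σ => ⟨σ, Bigstep.skip σ⟩, fun σ => ⟨σ, Bigstep.skip σ⟩⟩
  | inc y => exact ⟨fun σ => ⟨_, Bigstep.inc y σ⟩, fun σ => ⟨_, Bigstep.dec y σ⟩⟩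
  | dec y => exact ⟨fun σ => ⟨_, Bigstep.dec y σ⟩, fun σ => ⟨_, Bigstep.inc y σ⟩⟩
  | push y => exact ⟨fun σ => ⟨_, Bigstep.push y σ⟩, fun σ => ⟨_, Bigstep.pop y σ⟩⟩
  | pop y => exact ⟨fun σ => ⟨_, Bigstep.pop y σ⟩, fun σ => ⟨_, Bigstep.push y σ⟩⟩
  | seq p q ihp ihq =>
    constructor
    · intro σ
      obtain ⟨ν, h1⟩ := ihp.1 σ
      obtain ⟨τ, h2⟩ := ihq.1 ν
      exact ⟨τ, Bigstep.seq h1 h2⟩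
    · intro σ
      obtain ⟨ν, h1⟩ := ihq.2 σ
      obtain ⟨τ, h2⟩ := ihp.2 ν
      exact ⟨τ, Bigstep.seq h1 h2⟩
  | forLoop y p ih =>
    have key : ∀ q : Term, (∀ σ, ∃ τ, Bigstep q σ τ) → (∀ σ, ∃ τ, Bigstep (inv q) σ τ) →
        ∀ σ, ∃ τ, Bigstep (.forLoop y q) σ τ := by
      intro q h1 h2 σ
      rcases le_or_gt 0 (σ y).1 with hge | hlt
      · obtain ⟨τ, hi⟩ := iter_total h1 (σ y).1.toNat σ
        exact ⟨τ, Bigstep.forFwd hge hi⟩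
      · obtain ⟨τ, hi⟩ := iter_total h2 (-(σ y).1).toNat σ
        exact ⟨τ, Bigstep.forBwd hlt hi⟩
    exact ⟨key p ih.1 ih.2, key (inv p) ih.2 (by rw [tinv_inv]; exact ih.1)⟩

lemma rev (p : Term) (hwf : WF p) :
    (∀ σ τ, Bigstep p σ τ → Bigstep (inv p) τ σ) ∧
    (∀ σ τ, Bigstep (inv p) σ τ → Bigstep p τ σ) := by
  induction p with
  | skip =>
    constructor <;> intro σ τ h <;> cases h <;> exact Bigstep.skip _
  | inc y =>
    constructor <;> intro σ τ h <;> cases h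
    · have := Bigstep.dec y (upd σ y ((σ y).1 + 1, (σ y).2.1, (σ y).2.2))
      simpa [inv, upd_same, upd_upd, upd_self] using this
    · have := Bigstep.inc y (upd σ y ((σ y).1 - 1, (σ y).2.1, (σ y).2.2))
      simpa [upd_same, upd_upd, upd_self] using this
  | dec y =>
    constructor <;> intro σ τ h <;> cases h
    · have := Bigstep.inc y (upd σ y ((σ y).1 - 1, (σ y).2.1, (σ y).2.2))
      simpa [inv, upd_same, upd_upd, upd_self] using this
    · have := Bigstep.dec y (upd σ y ((σ y).1 + 1, (σ y).2.1, (σ y).2.2))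
      simpa [upd_same, upd_upd, upd_self] using this
  | push y =>
    constructor <;> intro σ τ h <;> cases h
    · have := Bigstep.pop y (upd σ y (push (σ y)))
      simpa [inv, upd_same, upd_upd, upd_self, pop_push] using this
    · have := Bigstep.push y (upd σ y (pop (σ y)))
      simpa [upd_same, upd_upd, upd_self, push_pop] using this
  | pop y =>
    constructor <;> intro σ τ h <;> cases h
    · have := Bigstep.push y (upd σ y (pop (σ y)))
      simpa [inv, upd_same, upd_upd, upd_self, push_pop] using this
    · have := Bigstep.pop y (upd σ y (push (σ y)))
      simpa [upd_same, upd_upd, upd_self, pop_push] using this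
  | seq p q ihp ihq =>
    obtain ⟨hp, hq⟩ := hwf
    refine ⟨?_, ?_⟩
    · intro σ τ h
      cases h with
      | seq h1 h2 => exact Bigstep.seq ((ihq hq).1 _ _ h2) ((ihp hp).1 _ _ h1)
    · intro σ τ h
      cases h with
      | seq h1 h2 => exact Bigstep.seq ((ihp hp).2 _ _ h2) ((ihq hq).2 _ _ h1)
  | forLoop y p ih =>
    obtain ⟨hxy, hp⟩ := hwf
    have ihr := ih hp
    have nc := nochange y p hxy
    refine ⟨?_, ?_⟩
    · intro σ τ h
      cases h with
      | forFwd h0 hi =>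
        have hτ : τ y = σ y := iter_nochange nc.1 hi
        exact Bigstep.forFwd (by rw [hτ]; exact h0)
          (by rw [hτ]; exact iter_rev ihr.1 hi)
      | forBwd h0 hi =>
        have hτ : τ y = σ y := iter_nochange nc.2 hi
        exact Bigstep.forBwd (by rw [hτ]; exact h0)
          (by rw [hτ, tinv_inv]; exact iter_rev ihr.2 hi)
    · intro σ τ h
      cases h with
      | forFwd h0 hi =>
        have hτ : τ y = σ y := iter_nochange nc.2 hi
        exact Bigstep.forFwd (by rw [hτ]; exact h0)
          (by rw [hτ]; exact iter_rev ihr.2 hi)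
      | forBwd h0 hi =>
        rw [tinv_inv] at hi
        have hτ : τ y = σ y := iter_nochange nc.1 hi
        exact Bigstep.forBwd (by rw [hτ]; exact h0)
          (by rw [hτ]; exact iter_rev ihr.1 hi)

theorem rsem_strongly_reversible (P : Term) (hP : WF P) (σ : State) :
    Bigstep (.seq P (inv P)) σ σ := by
  obtain ⟨τ, h⟩ := (total P).1 σ
  exact Bigstep.seq h ((rev P hP).1 _ _ h)
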